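/- For every x ∈ X the following hold: the function t ↦ D⁺_t(x) is upper semicontinuous on (0,∞) and t ↦ D⁻_t(x) is lower semicontinuous on (0,∞); D⁺_t(x) → 0 and D⁻_t(x) → 0 as t ↓ 0; the monotonicity D⁻_t(x) ≤ D⁺_t(x) ≤ D⁻_s(x) holds whenever 0 < t < s; and the set of t ∈ (0,∞) for which D⁺_t(x) ≠ D⁻_t(x) is at most countable. -/
import Mathlib


/-!
Setting: `(X, d)` is a complete length metric space, `f : X × X → ℝ` is lower
semicontinuous, bounded from below, and satisfies the reverse triangle inequality
`f(x,z) ≥ f(x,y) + f(y,z)`.  For `t > 0` set `F(t,x;y) := f(x,y) + d(x,y)²/(2t)`,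
`f_t(x) := inf_y F(t,x;y)`, and `f_0(x) := f(x,x)`.  `D⁺_t(x)` (resp. `D⁻_t(x)`)
is the largest (resp. smallest) value of `limsup_n d(x,y_n)` (resp. `liminf_n d(x,y_n)`)
among minimizing sequences `(y_n)` of `F(t,x;·)`.
-/

open Filter Topology Metric MeasureTheory
open scoped ENNReal NNReal

noncomputable section

/-- A metric space is a *length space* if the distance between any two points equals the
infimum of the lengths (total variations) of continuous curves joining them. -/
def IsLengthSpace (X : Type*) [MetricSpace X] : Prop :=
  ∀ x y : X,
    ENNReal.ofReal (dist x y) =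
      ⨅ γ : { γ : ℝ → X // ContinuousOn γ (Set.Icc 0 1) ∧ γ 0 = x ∧ γ 1 = y },
        eVariationOn γ.1 (Set.Icc 0 1)

variable {X : Type*} [MetricSpace X]

/-- `FH f t x y = f(x,y) + d(x,y)² / (2t)`. -/
def FH (f : X × X → ℝ) (t : ℝ) (x y : X) : ℝ :=
  f (x, y) + dist x y ^ 2 / (2 * t)

/-- `ft f t x = inf_y (f(x,y) + d(x,y)²/(2t))` for `t ≠ 0`, and `ft f 0 x = f(x,x)`. -/
def ft (f : X × X → ℝ) (t : ℝ) (x : X) : ℝ :=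
  if t = 0 then f (x, x) else ⨅ y : X, FH f t x y

/-- `y : ℕ → X` is a minimizing sequence for `F(t,x;·)`. -/
def MinSeq (f : X × X → ℝ) (t : ℝ) (x : X) (y : ℕ → X) : Prop :=
  Tendsto (fun n => FH f t x (y n)) atTop (𝓝 (ft f t x))

/-- `D⁺_t(x)`: the largest value of `limsup_n d(x, y_n)` among minimizing sequences. -/
def Dplus (f : X × X → ℝ) (t : ℝ) (x : X) : ℝ :=
  sSup { L : ℝ | ∃ y : ℕ → X, MinSeq f t x y ∧
    Filter.limsup (fun n => dist x (y n)) atTop = L }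

/-- `D⁻_t(x)`: the smallest value of `liminf_n d(x, y_n)` among minimizing sequences. -/
def Dminus (f : X × X → ℝ) (t : ℝ) (x : X) : ℝ :=
  sInf { L : ℝ | ∃ y : ℕ → X, MinSeq f t x y ∧
    Filter.liminf (fun n => dist x (y n)) atTop = L }

/-- Descending slope `|∂⁻ g|(x) = limsup_{y→x} (g(y) - g(x))⁻ / d(x,y)`, valued in `[0,∞]`. -/
def descSlope (g : X → ℝ) (x : X) : ℝ≥0∞ :=
  Filter.limsup (fun y => ENNReal.ofReal ((g x - g y) / dist x y)) (𝓝[≠] x)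

/-- The tilt `tilt(f)(x) = limsup_{y→x} (f(x,y))⁻ / d(x,y)`, valued in `[0,∞]`. -/
def tilt (f : X × X → ℝ) (x : X) : ℝ≥0∞ :=
  Filter.limsup (fun y => ENNReal.ofReal ((-f (x, y)) / dist x y)) (𝓝[≠] x)

namespace Statement1Proof

/-- The set of limsup-values of minimizing sequences. -/
def SP (f : X × X → ℝ) (t : ℝ) (x : X) : Set ℝ :=
  { L : ℝ | ∃ y : ℕ → X, MinSeq f t x y ∧
    Filter.limsup (fun n => dist x (y n)) atTop = L }

/-- The set of liminf-values of minimizing sequences. -/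
def SM (f : X × X → ℝ) (t : ℝ) (x : X) : Set ℝ :=
  { L : ℝ | ∃ y : ℕ → X, MinSeq f t x y ∧
    Filter.liminf (fun n => dist x (y n)) atTop = L }

lemma Dplus_eq (f : X × X → ℝ) (t : ℝ) (x : X) : Dplus f t x = sSup (SP f t x) := rfl

lemma Dminus_eq (f : X × X → ℝ) (t : ℝ) (x : X) : Dminus f t x = sInf (SM f t x) := rfl

variable {f : X × X → ℝ} {C : ℝ} {x : X}

lemma C_le_FH (hC : ∀ p : X × X, C ≤ f p) {t : ℝ} (ht : 0 < t) (w : X) :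
    C ≤ FH f t x w := by
  have h1 := hC (x, w)
  have h2 : (0:ℝ) ≤ dist x w ^ 2 / (2 * t) := by positivity
  unfold FH; linarith

lemma FH_bddBelow (hC : ∀ p : X × X, C ≤ f p) {t : ℝ} (ht : 0 < t) :
    BddBelow (Set.range (FH f t x)) := by
  refine ⟨C, ?_⟩
  rintro v ⟨w, rfl⟩
  exact C_le_FH hC ht w

lemma ft_eq (f : X × X → ℝ) (x : X) {t : ℝ} (ht : 0 < t) :
    ft f t x = ⨅ w : X, FH f t x w := if_neg ht.ne'

lemma ft_le (hC : ∀ p : X × X, C ≤ f p) {t : ℝ} (ht : 0 < t) (w : X) :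
    ft f t x ≤ FH f t x w := by
  rw [ft_eq f x ht]
  exact ciInf_le (FH_bddBelow hC ht) w

lemma C_le_ft (hC : ∀ p : X × X, C ≤ f p) {t : ℝ} (ht : 0 < t) :
    C ≤ ft f t x := by
  haveI : Nonempty X := ⟨x⟩
  rw [ft_eq f x ht]
  exact le_ciInf fun w => C_le_FH hC ht w

lemma ft_le_diag (hC : ∀ p : X × X, C ≤ f p) {t : ℝ} (ht : 0 < t) :
    ft f t x ≤ f (x, x) := by
  have h := ft_le (x := x) hC ht x
  have heq : FH f t x x = f (x, x) := by
    simp [FH]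
  linarith [h, heq.le]

lemma ft_mono (hC : ∀ p : X × X, C ≤ f p) {t s : ℝ} (ht : 0 < t) (hts : t ≤ s) :
    ft f s x ≤ ft f t x := by
  haveI : Nonempty X := ⟨x⟩
  have hs : 0 < s := ht.trans_le hts
  rw [ft_eq f x ht, ft_eq f x hs]
  refine le_ciInf fun w => (ciInf_le (FH_bddBelow hC hs) w).trans ?_
  unfold FH
  have : dist x w ^ 2 / (2 * s) ≤ dist x w ^ 2 / (2 * t) := by
    apply div_le_div_of_nonneg_left (by positivity) (by linarith) (by linarith)
  linarith

lemma exists_minSeq (f : X × X → ℝ) (x : X) {t : ℝ}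
    (hC : ∀ p : X × X, C ≤ f p) (ht : 0 < t) :
    ∃ y : ℕ → X, MinSeq f t x y := by
  have hne : (Set.range (FH f t x)).Nonempty := ⟨FH f t x x, ⟨x, rfl⟩⟩
  obtain ⟨u, -, hu, hmem⟩ := exists_seq_tendsto_sInf hne (FH_bddBelow hC ht)
  choose w hw using hmem
  refine ⟨w, ?_⟩
  unfold MinSeq
  rw [ft_eq f x ht]
  have h1 : (fun n => FH f t x (w n)) = u := funext hw
  rw [h1]
  rw [show (⨅ w : X, FH f t x w) = sInf (Set.range (FH f t x)) from rfl]
  exact hu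

lemma dist_sq_le (hC : ∀ p : X × X, C ≤ f p) {t : ℝ} (ht : 0 < t) {w : X} {η : ℝ}
    (h : FH f t x w ≤ ft f t x + η) :
    dist x w ^ 2 ≤ 2 * t * (f (x, x) + η - C) := by
  have h1 : C ≤ f (x, w) := hC (x, w)
  have h2 : ft f t x ≤ f (x, x) := ft_le_diag hC ht
  have h3 : dist x w ^ 2 / (2 * t) ≤ f (x, x) + η - C := by
    unfold FH at h; linarith
  have h4 := mul_le_mul_of_nonneg_left h3 (by positivity : (0:ℝ) ≤ 2 * t)
  have h5 : 2 * t * (dist x w ^ 2 / (2 * t)) = dist x w ^ 2 := by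
    field_simp
  linarith

lemma minseq_ev_bound (hC : ∀ p : X × X, C ≤ f p) {t : ℝ} (ht : 0 < t) {y : ℕ → X}
    (hy : MinSeq f t x y) :
    ∀ᶠ n in atTop, dist x (y n) ≤ Real.sqrt (2 * t * (f (x, x) + 1 - C)) := by
  have hev : ∀ᶠ n in atTop, FH f t x (y n) < ft f t x + 1 :=
    hy.eventually (gt_mem_nhds (lt_add_one (ft f t x)))
  exact hev.mono fun n hn => Real.le_sqrt_of_sq_le (dist_sq_le hC ht hn.le)

lemma minseq_isBoundedUnder (hC : ∀ p : X × X, C ≤ f p) {t : ℝ} (ht : 0 < t) {y : ℕ → X}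
    (hy : MinSeq f t x y) :
    IsBoundedUnder (· ≤ ·) atTop (fun n => dist x (y n)) :=
  ⟨Real.sqrt (2 * t * (f (x, x) + 1 - C)), by
    simpa using minseq_ev_bound hC ht hy⟩

lemma SP_nonempty (hC : ∀ p : X × X, C ≤ f p) {t : ℝ} (ht : 0 < t) :
    (SP f t x).Nonempty := by
  obtain ⟨y, hy⟩ := exists_minSeq f x hC ht
  exact ⟨_, y, hy, rfl⟩

lemma SM_nonempty (hC : ∀ p : X × X, C ≤ f p) {t : ℝ} (ht : 0 < t) :
    (SM f t x).Nonempty := by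
  obtain ⟨y, hy⟩ := exists_minSeq f x hC ht
  exact ⟨_, y, hy, rfl⟩

lemma mem_SP_le (hC : ∀ p : X × X, C ≤ f p) {t : ℝ} (ht : 0 < t) {L : ℝ}
    (hL : L ∈ SP f t x) : L ≤ Real.sqrt (2 * t * (f (x, x) + 1 - C)) := by
  obtain ⟨y, hy, rfl⟩ := hL
  exact limsup_le_of_le (isCoboundedUnder_le_of_le atTop fun n => dist_nonneg)
    (minseq_ev_bound hC ht hy)

lemma mem_SM_nonneg (hC : ∀ p : X × X, C ≤ f p) {t : ℝ} (ht : 0 < t) {L : ℝ}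
    (hL : L ∈ SM f t x) : 0 ≤ L := by
  obtain ⟨y, hy, rfl⟩ := hL
  exact le_liminf_of_le ((minseq_isBoundedUnder hC ht hy).isCoboundedUnder_ge)
    (Eventually.of_forall fun n => dist_nonneg)

lemma SP_bddAbove (hC : ∀ p : X × X, C ≤ f p) {t : ℝ} (ht : 0 < t) :
    BddAbove (SP f t x) :=
  ⟨Real.sqrt (2 * t * (f (x, x) + 1 - C)), fun _ hL => mem_SP_le hC ht hL⟩

lemma SM_bddBelow (hC : ∀ p : X × X, C ≤ f p) {t : ℝ} (ht : 0 < t) :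
    BddBelow (SM f t x) :=
  ⟨0, fun _ hL => mem_SM_nonneg hC ht hL⟩

/-- The key comparison: for `t < s`, the limsup of distances of any minimizing sequence at
time `t` is at most the liminf of distances of any minimizing sequence at time `s`. -/
lemma key (hC : ∀ p : X × X, C ≤ f p) {t s : ℝ} (ht : 0 < t) (hts : t < s)
    {y z : ℕ → X} (hy : MinSeq f t x y) (hz : MinSeq f s x z) :
    Filter.limsup (fun n => dist x (y n)) atTop ≤
      Filter.liminf (fun n => dist x (z n)) atTop := by
  have hs : 0 < s := ht.trans hts
  set a := Filter.limsup (fun n => dist x (y n)) atTop with ha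
  set b := Filter.liminf (fun n => dist x (z n)) atTop with hb
  by_contra hab
  push_neg at hab
  have hzbd : IsBoundedUnder (· ≤ ·) atTop (fun n => dist x (z n)) :=
    minseq_isBoundedUnder hC hs hz
  have hb0 : 0 ≤ b :=
    le_liminf_of_le hzbd.isCoboundedUnder_ge (Eventually.of_forall fun n => dist_nonneg)
  set r' : ℝ := (2 * b + a) / 3 with hr'
  set r : ℝ := (b + 2 * a) / 3 with hr
  have hbr' : b < r' := by rw [hr']; linarith
  have hr'r : r' < r := by rw [hr', hr]; linarith
  have hra : r < a := by rw [hr]; linarith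
  have hr'0 : 0 ≤ r' := by rw [hr']; linarith
  have hr0 : 0 < r := by rw [hr]; linarith
  set μ : ℝ := 1 / (2 * t) - 1 / (2 * s) with hμ
  have hμpos : 0 < μ := by
    rw [hμ]
    have h1 : 1 / (2 * s) < 1 / (2 * t) :=
      one_div_lt_one_div_of_lt (by positivity) (by linarith)
    linarith
  have hrr' : r' ^ 2 < r ^ 2 := by nlinarith
  set δ : ℝ := μ * (r ^ 2 - r' ^ 2) with hδ
  have hδpos : 0 < δ := mul_pos hμpos (by linarith)
  -- pick a good index for z
  have h1 : ∃ᶠ n in atTop, dist x (z n) < r' :=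
    frequently_lt_of_liminf_lt hzbd.isCoboundedUnder_ge (by rw [← hb]; exact hbr')
  have h2 : ∀ᶠ n in atTop, FH f s x (z n) < ft f s x + δ / 4 :=
    hz.eventually (gt_mem_nhds (by linarith))
  obtain ⟨m, hm1, hm2⟩ := (h1.and_eventually h2).exists
  -- pick a good index for y
  have h3 : ∃ᶠ n in atTop, r < dist x (y n) :=
    frequently_lt_of_lt_limsup (isCoboundedUnder_le_of_le atTop fun n => dist_nonneg)
      (by rw [← ha]; exact hra)
  have h4 : ∀ᶠ n in atTop, FH f t x (y n) < ft f t x + δ / 4 :=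
    hy.eventually (gt_mem_nhds (by linarith))
  obtain ⟨n, hn1, hn2⟩ := (h3.and_eventually h4).exists
  -- put things together
  have e1 : ft f t x ≤ FH f t x (z m) := ft_le hC ht (z m)
  have e2 : ft f s x ≤ FH f s x (y n) := ft_le hC hs (y n)
  have key1 : FH f t x (z m) = FH f s x (z m) + dist x (z m) ^ 2 * μ := by
    unfold FH; rw [hμ]; field_simp; ring
  have key2 : FH f s x (y n) = FH f t x (y n) - dist x (y n) ^ 2 * μ := by
    unfold FH; rw [hμ]; field_simp; ring
  have hd1 : dist x (z m) ^ 2 ≤ r' ^ 2 := by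
    have := dist_nonneg (x := x) (y := z m); nlinarith
  have hd2 : r ^ 2 ≤ dist x (y n) ^ 2 := by
    nlinarith
  have h5 : dist x (z m) ^ 2 * μ ≤ r' ^ 2 * μ :=
    mul_le_mul_of_nonneg_right hd1 hμpos.le
  have h6 : r ^ 2 * μ ≤ dist x (y n) ^ 2 * μ :=
    mul_le_mul_of_nonneg_right hd2 hμpos.le
  have hδ' : δ = r ^ 2 * μ - r' ^ 2 * μ := by rw [hδ]; ring
  linarith

lemma Dplus_le_Dminus (hC : ∀ p : X × X, C ≤ f p) {t s : ℝ} (ht : 0 < t) (hts : t < s) :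
    Dplus f t x ≤ Dminus f s x := by
  have hs : 0 < s := ht.trans hts
  rw [Dplus_eq, Dminus_eq]
  refine csSup_le (SP_nonempty hC ht) fun L hL => le_csInf (SM_nonempty hC hs) fun L' hL' => ?_
  obtain ⟨y, hy, rfl⟩ := hL
  obtain ⟨z, hz, rfl⟩ := hL'
  exact key hC ht hts hy hz

lemma Dminus_le_Dplus (hC : ∀ p : X × X, C ≤ f p) {t : ℝ} (ht : 0 < t) :
    Dminus f t x ≤ Dplus f t x := by
  obtain ⟨y, hy⟩ := exists_minSeq f x hC ht
  have h1 : Dminus f t x ≤ Filter.liminf (fun n => dist x (y n)) atTop := by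
    rw [Dminus_eq]; exact csInf_le (SM_bddBelow hC ht) ⟨y, hy, rfl⟩
  have h2 : Filter.liminf (fun n => dist x (y n)) atTop ≤
      Filter.limsup (fun n => dist x (y n)) atTop :=
    liminf_le_limsup (minseq_isBoundedUnder hC ht hy)
      (isBoundedUnder_of ⟨0, fun n => dist_nonneg⟩)
  have h3 : Filter.limsup (fun n => dist x (y n)) atTop ≤ Dplus f t x := by
    rw [Dplus_eq]; exact le_csSup (SP_bddAbove hC ht) ⟨y, hy, rfl⟩
  linarith

lemma Dminus_nonneg (hC : ∀ p : X × X, C ≤ f p) {t : ℝ} (ht : 0 < t) :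
    0 ≤ Dminus f t x := by
  rw [Dminus_eq]
  exact le_csInf (SM_nonempty hC ht) fun L hL => mem_SM_nonneg hC ht hL

lemma Dplus_le_sqrt (hC : ∀ p : X × X, C ≤ f p) {t : ℝ} (ht : 0 < t) :
    Dplus f t x ≤ Real.sqrt (2 * t * (f (x, x) + 1 - C)) := by
  rw [Dplus_eq]
  exact csSup_le (SP_nonempty hC ht) fun L hL => mem_SP_le hC ht hL

lemma Dplus_mono (hC : ∀ p : X × X, C ≤ f p) {t s : ℝ} (ht : 0 < t) (hts : t < s) :
    Dplus f t x ≤ Dplus f s x :=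
  (Dplus_le_Dminus hC ht hts).trans (Dminus_le_Dplus hC (ht.trans hts))

lemma Dminus_mono (hC : ∀ p : X × X, C ≤ f p) {t s : ℝ} (ht : 0 < t) (hts : t < s) :
    Dminus f t x ≤ Dminus f s x :=
  (Dminus_le_Dplus hC ht).trans (Dplus_le_Dminus hC ht hts)

/-- Quantitative left-continuity estimate for `t ↦ f_t(x)`. -/
lemma ft_cont_aux (hC : ∀ p : X × X, C ≤ f p) {s t : ℝ} (hs : 0 < s) (hst : s ≤ t)
    {ε : ℝ} (hε : 0 < ε) :
    ft f s x ≤ ft f t x + ε + ((t - s) / s) * (ft f t x + ε - C) := by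
  haveI : Nonempty X := ⟨x⟩
  have ht : 0 < t := hs.trans_le hst
  obtain ⟨w, hw⟩ : ∃ w : X, FH f t x w < ft f t x + ε := by
    have h : (⨅ w : X, FH f t x w) < ft f t x + ε := by
      rw [← ft_eq f x ht]; linarith
    exact exists_lt_of_ciInf_lt h
  have hd : dist x w ^ 2 ≤ 2 * t * (ft f t x + ε - C) := by
    have h1 : C ≤ f (x, w) := hC (x, w)
    have h3 : dist x w ^ 2 / (2 * t) ≤ ft f t x + ε - C := by
      unfold FH at hw; linarith
    have h4 := mul_le_mul_of_nonneg_left h3 (by positivity : (0:ℝ) ≤ 2 * t)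
    have h5 : 2 * t * (dist x w ^ 2 / (2 * t)) = dist x w ^ 2 := by field_simp
    linarith
  have hle : ft f s x ≤ FH f s x w := ft_le hC hs w
  have heq : FH f s x w = FH f t x w + dist x w ^ 2 * ((t - s) / (2 * s * t)) := by
    unfold FH; field_simp; ring
  have hcoef : (0:ℝ) ≤ (t - s) / (2 * s * t) :=
    div_nonneg (by linarith) (by positivity)
  have hb : dist x w ^ 2 * ((t - s) / (2 * s * t)) ≤
      (2 * t * (ft f t x + ε - C)) * ((t - s) / (2 * s * t)) :=
    mul_le_mul_of_nonneg_right hd hcoef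
  have heq2 : (2 * t * (ft f t x + ε - C)) * ((t - s) / (2 * s * t)) =
      ((t - s) / s) * (ft f t x + ε - C) := by
    field_simp
  linarith

end Statement1Proof

open Statement1Proof in
/-- For every `x ∈ X`: `t ↦ D⁺_t(x)` is upper semicontinuous and `t ↦ D⁻_t(x)` is lower
semicontinuous on `(0,∞)`; both tend to `0` as `t ↓ 0`; `D⁻_t(x) ≤ D⁺_t(x) ≤ D⁻_s(x)`
whenever `0 < t < s`; and `D⁺_t(x) = D⁻_t(x)` for all but countably many `t`. -/
theorem statement1 [CompleteSpace X] (hX : IsLengthSpace X)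
    (f : X × X → ℝ) (hlsc : LowerSemicontinuous f)
    (hbdd : ∃ C : ℝ, ∀ p : X × X, C ≤ f p)
    (hrev : ∀ x y z : X, f (x, y) + f (y, z) ≤ f (x, z)) (x : X) :
    UpperSemicontinuousOn (fun t => Dplus f t x) (Set.Ioi 0) ∧
    LowerSemicontinuousOn (fun t => Dminus f t x) (Set.Ioi 0) ∧
    Tendsto (fun t => Dplus f t x) (𝓝[>] (0 : ℝ)) (𝓝 0) ∧
    Tendsto (fun t => Dminus f t x) (𝓝[>] (0 : ℝ)) (𝓝 0) ∧
    (∀ t s : ℝ, 0 < t → t < s →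
      Dminus f t x ≤ Dplus f t x ∧ Dplus f t x ≤ Dminus f s x) ∧
    Set.Countable { t : ℝ | 0 < t ∧ Dplus f t x ≠ Dminus f t x } := by
  obtain ⟨C, hC⟩ := hbdd
  -- Upper semicontinuity of D⁺ on (0,∞)
  have husc : UpperSemicontinuousOn (fun t => Dplus f t x) (Set.Ioi 0) := by
    intro t ht y₀ hy₀
    simp only [Set.mem_Ioi] at ht
    have claim : ∃ δ > 0, ∀ s : ℝ, t < s → s < t + δ → Dplus f s x < y₀ := by
      by_contra hcon
      push_neg at hcon
      choose s hs1 hs2 hs3 using fun k : ℕ =>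
        hcon (1 / ((k : ℝ) + 1)) (by positivity)
      obtain ⟨y₁, hy₁l, hy₁r⟩ := exists_between hy₀
      have hsk : ∀ k : ℕ, 0 < s k := fun k => ht.trans (hs1 k)
      -- pick points w k
      have hpick : ∀ k : ℕ, ∃ w : X, y₁ < dist x w ∧
          FH f (s k) x w < ft f (s k) x + 1 / ((k : ℝ) + 1) := by
        intro k
        have h1 : y₁ < Dplus f (s k) x := hy₁r.trans_le (hs3 k)
        rw [Dplus_eq] at h1
        obtain ⟨L, hL, hy₁L⟩ := exists_lt_of_lt_csSup (SP_nonempty hC (hsk k)) h1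
        obtain ⟨z, hz, rfl⟩ := hL
        have hfr : ∃ᶠ n in atTop, y₁ < dist x (z n) :=
          frequently_lt_of_lt_limsup
            (isCoboundedUnder_le_of_le atTop fun n => dist_nonneg) hy₁L
        have hev : ∀ᶠ n in atTop, FH f (s k) x (z n) < ft f (s k) x + 1 / ((k : ℝ) + 1) :=
          hz.eventually (gt_mem_nhds (lt_add_of_pos_right _ (by positivity)))
        obtain ⟨n, hn1, hn2⟩ := (hfr.and_eventually hev).exists
        exact ⟨z n, hn1, hn2⟩
      choose w hw1 hw2 using hpick
      set B2 : ℝ := 2 * (t + 1) * (f (x, x) + 1 - C) with hB2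
      have hfxx : C ≤ f (x, x) := hC (x, x)
      have hB2nn : 0 ≤ B2 := by
        rw [hB2]; nlinarith
      have hdb : ∀ k : ℕ, dist x (w k) ^ 2 ≤ B2 := by
        intro k
        have h1 : dist x (w k) ^ 2 ≤ 2 * (s k) * (f (x, x) + 1 / ((k : ℝ) + 1) - C) :=
          dist_sq_le hC (hsk k) (hw2 k).le
        have hk1 : 1 / ((k : ℝ) + 1) ≤ 1 := by
          rw [div_le_one (by positivity)]; linarith [Nat.cast_nonneg (α := ℝ) k]
        have hsle : s k ≤ t + 1 := by
          have := hs2 k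
          have : s k < t + 1 / ((k : ℝ) + 1) := this
          linarith
        have hkpos : (0:ℝ) ≤ 1 / ((k : ℝ) + 1) := by positivity
        rw [hB2]
        nlinarith [hsk k]
      have hlower : ∀ k : ℕ, ft f t x ≤ FH f t x (w k) := fun k => ft_le hC ht (w k)
      have hupper : ∀ k : ℕ, FH f t x (w k) ≤
          ft f t x + (1 / ((k : ℝ) + 1) + B2 / (2 * t ^ 2) * (1 / ((k : ℝ) + 1))) := by
        intro k
        have hskpos := hsk k
        have heq : FH f t x (w k) = FH f (s k) x (w k) +
            dist x (w k) ^ 2 * (1 / (2 * t) - 1 / (2 * s k)) := by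
          unfold FH; field_simp; ring
        have hμeq : 1 / (2 * t) - 1 / (2 * s k) = (s k - t) / (2 * t * s k) := by
          field_simp
        have hμ1 : (0:ℝ) ≤ 1 / (2 * t) - 1 / (2 * s k) := by
          rw [hμeq]
          exact div_nonneg (by linarith [hs1 k]) (by positivity)
        have hμ2 : 1 / (2 * t) - 1 / (2 * s k) ≤ (1 / ((k : ℝ) + 1)) / (2 * t ^ 2) := by
          rw [hμeq]
          apply div_le_div₀ (by positivity) (by linarith [hs2 k]) (by positivity)
          nlinarith [hs1 k]
        have hmul : dist x (w k) ^ 2 * (1 / (2 * t) - 1 / (2 * s k)) ≤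
            B2 * ((1 / ((k : ℝ) + 1)) / (2 * t ^ 2)) :=
          mul_le_mul (hdb k) hμ2 hμ1 hB2nn
        have hftm : ft f (s k) x ≤ ft f t x := ft_mono hC ht (hs1 k).le
        have hB2e : B2 * ((1 / ((k : ℝ) + 1)) / (2 * t ^ 2)) =
            B2 / (2 * t ^ 2) * (1 / ((k : ℝ) + 1)) := by ring
        have := (hw2 k).le
        rw [heq]
        rw [hB2e] at hmul
        linarith
      have hmin : MinSeq f t x w := by
        unfold MinSeq
        refine tendsto_of_tendsto_of_tendsto_of_le_of_le tendsto_const_nhds ?_ hlower hupper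
        have h0 : Tendsto (fun k : ℕ => 1 / ((k : ℝ) + 1)) atTop (𝓝 0) :=
          tendsto_one_div_add_atTop_nhds_zero_nat
        have h1 : Tendsto
            (fun k : ℕ => ft f t x + (1 / ((k : ℝ) + 1) + B2 / (2 * t ^ 2) * (1 / ((k : ℝ) + 1))))
            atTop (𝓝 (ft f t x + (0 + B2 / (2 * t ^ 2) * 0))) :=
          tendsto_const_nhds.add (h0.add (tendsto_const_nhds.mul h0))
        simpa using h1
      have hls : y₁ ≤ Filter.limsup (fun k => dist x (w k)) atTop := by
        refine le_limsup_of_frequently_le (Frequently.of_forall fun k => (hw1 k).le) ?_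
        exact isBoundedUnder_of ⟨Real.sqrt B2, fun k =>
          Real.le_sqrt_of_sq_le (hdb k)⟩
      have hfin : Filter.limsup (fun k => dist x (w k)) atTop ≤ Dplus f t x := by
        rw [Dplus_eq]
        exact le_csSup (SP_bddAbove hC ht) ⟨w, hmin, rfl⟩
      linarith
    obtain ⟨δ, hδ, hclaim⟩ := claim
    have hmem : Set.Ioo (t - 1) (t + δ) ∈ 𝓝[Set.Ioi 0] t :=
      nhdsWithin_le_nhds (Ioo_mem_nhds (by linarith) (by linarith))
    filter_upwards [hmem, self_mem_nhdsWithin] with u hu hu0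
    simp only [Set.mem_Ioi] at hu0
    rcases lt_trichotomy u t with h | h | h
    · exact (Dplus_mono hC hu0 h).trans_lt hy₀
    · subst h; exact hy₀
    · exact hclaim u h hu.2
  -- Lower semicontinuity of D⁻ on (0,∞)
  have hlscD : LowerSemicontinuousOn (fun t => Dminus f t x) (Set.Ioi 0) := by
    intro t ht y₀ hy₀
    simp only [Set.mem_Ioi] at ht
    have claim : ∃ δ > 0, ∀ s : ℝ, t - δ < s → s < t → y₀ < Dminus f s x := by
      by_contra hcon
      push_neg at hcon
      choose s hs1 hs2 hs3 using fun k : ℕ =>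
        hcon (min (1 / ((k : ℝ) + 1)) (t / 2)) (lt_min (by positivity) (half_pos ht))
      obtain ⟨y₁, hy₁l, hy₁r⟩ := exists_between hy₀
      have hskl : ∀ k : ℕ, t / 2 < s k := fun k => by
        have h := hs1 k
        have : t - min (1 / ((k : ℝ) + 1)) (t / 2) ≥ t - t / 2 := by
          have := min_le_right (1 / ((k : ℝ) + 1)) (t / 2); linarith
        linarith
      have hsk : ∀ k : ℕ, 0 < s k := fun k => lt_trans (by linarith) (hskl k)
      have hstk : ∀ k : ℕ, t - s k < 1 / ((k : ℝ) + 1) := fun k => by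
        have h := hs1 k
        have := min_le_left (1 / ((k : ℝ) + 1)) (t / 2)
        linarith
      -- pick points w k
      have hpick : ∀ k : ℕ, ∃ w : X, dist x w < y₁ ∧
          FH f (s k) x w < ft f (s k) x + 1 / ((k : ℝ) + 1) := by
        intro k
        have h1 : Dminus f (s k) x < y₁ := (hs3 k).trans_lt hy₁l
        rw [Dminus_eq] at h1
        obtain ⟨L, hL, hLy₁⟩ := exists_lt_of_csInf_lt (SM_nonempty hC (hsk k)) h1
        obtain ⟨z, hz, rfl⟩ := hL
        have hfr : ∃ᶠ n in atTop, dist x (z n) < y₁ :=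
          frequently_lt_of_liminf_lt
            ((minseq_isBoundedUnder hC (hsk k) hz).isCoboundedUnder_ge) hLy₁
        have hev : ∀ᶠ n in atTop, FH f (s k) x (z n) < ft f (s k) x + 1 / ((k : ℝ) + 1) :=
          hz.eventually (gt_mem_nhds (lt_add_of_pos_right _ (by positivity)))
        obtain ⟨n, hn1, hn2⟩ := (hfr.and_eventually hev).exists
        exact ⟨z n, hn1, hn2⟩
      choose w hw1 hw2 using hpick
      have hlower : ∀ k : ℕ, ft f t x ≤ FH f t x (w k) := fun k => ft_le hC ht (w k)
      have hupper : ∀ k : ℕ, FH f t x (w k) ≤ ft f (s k) x + 1 / ((k : ℝ) + 1) := by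
        intro k
        have h1 : FH f t x (w k) ≤ FH f (s k) x (w k) := by
          unfold FH
          have : dist x (w k) ^ 2 / (2 * t) ≤ dist x (w k) ^ 2 / (2 * s k) := by
            apply div_le_div_of_nonneg_left (by positivity) (by linarith [hsk k])
            have := hs2 k; linarith
          linarith
        exact h1.trans (hw2 k).le
      -- ft f (s k) x → ft f t x
      have hft : Tendsto (fun k : ℕ => ft f (s k) x) atTop (𝓝 (ft f t x)) := by
        rw [tendsto_order]
        constructor
        · intro a hadown
          refine Eventually.of_forall fun k => ?_
          have := ft_mono (x := x) hC (hsk k) (hs2 k).le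
          linarith
        · intro a haup
          set ε : ℝ := (a - ft f t x) / 2 with hε
          have hεpos : 0 < ε := by rw [hε]; linarith
          set M : ℝ := ft f t x + ε - C with hM
          have hMpos : 0 < M := by
            have := C_le_ft (x := x) hC ht; rw [hM]; linarith
          have hz : Tendsto (fun k : ℕ => (2 * M / t) * (1 / ((k : ℝ) + 1))) atTop (𝓝 0) := by
            have := tendsto_one_div_add_atTop_nhds_zero_nat.const_mul (2 * M / t)
            simpa using this
          filter_upwards [hz.eventually (gt_mem_nhds hεpos)] with k hk
          have hbound := ft_cont_aux (x := x) hC (hsk k) (hs2 k).le hεpos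
          have hcoef : ((t - s k) / s k) * M ≤ (2 * M / t) * (1 / ((k : ℝ) + 1)) := by
            have h1 : (t - s k) / s k ≤ (1 / ((k : ℝ) + 1)) / (t / 2) := by
              apply div_le_div₀ (by positivity) (hstk k).le (by linarith) (hskl k).le
            have h2 : (1 / ((k : ℝ) + 1)) / (t / 2) = (2 / t) * (1 / ((k : ℝ) + 1)) := by
              field_simp
            rw [h2] at h1
            have h3 := mul_le_mul_of_nonneg_right h1 hMpos.le
            calc ((t - s k) / s k) * M ≤ (2 / t) * (1 / ((k : ℝ) + 1)) * M := h3
              _ = (2 * M / t) * (1 / ((k : ℝ) + 1)) := by ring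
          have : ft f (s k) x ≤ ft f t x + ε + ((t - s k) / s k) * M := by
            rw [hM]; exact hbound
          have hfin : ft f (s k) x < ft f t x + ε + ε := by linarith
          rw [hε] at hfin; linarith
      have hmin : MinSeq f t x w := by
        unfold MinSeq
        refine tendsto_of_tendsto_of_tendsto_of_le_of_le tendsto_const_nhds ?_ hlower hupper
        have h0 : Tendsto (fun k : ℕ => 1 / ((k : ℝ) + 1)) atTop (𝓝 0) :=
          tendsto_one_div_add_atTop_nhds_zero_nat
        simpa using hft.add h0
      have hli : Filter.liminf (fun k => dist x (w k)) atTop ≤ y₁ :=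
        liminf_le_of_frequently_le (Frequently.of_forall fun k => (hw1 k).le)
          (isBoundedUnder_of ⟨0, fun k => dist_nonneg⟩)
      have hfin : Dminus f t x ≤ Filter.liminf (fun k => dist x (w k)) atTop := by
        rw [Dminus_eq]
        exact csInf_le (SM_bddBelow hC ht) ⟨w, hmin, rfl⟩
      linarith
    obtain ⟨δ, hδ, hclaim⟩ := claim
    have hmem : Set.Ioo (t - δ) (t + 1) ∈ 𝓝[Set.Ioi 0] t :=
      nhdsWithin_le_nhds (Ioo_mem_nhds (by linarith) (by linarith))
    filter_upwards [hmem, self_mem_nhdsWithin] with u hu hu0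
    simp only [Set.mem_Ioi] at hu0
    rcases lt_trichotomy u t with h | h | h
    · exact hclaim u hu.1 h
    · subst h; exact hy₀
    · exact hy₀.trans_le ((Dminus_le_Dplus hC ht).trans (Dplus_le_Dminus hC ht h))
  -- Limits as t ↓ 0
  have hfxx : C ≤ f (x, x) := hC (x, x)
  have hsq : Tendsto (fun t : ℝ => Real.sqrt (2 * t * (f (x, x) + 1 - C)))
      (𝓝[>] (0 : ℝ)) (𝓝 0) := by
    have hcont : Continuous fun t : ℝ => Real.sqrt (2 * t * (f (x, x) + 1 - C)) :=
      Real.continuous_sqrt.comp (by continuity)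
    have h := (hcont.tendsto 0).mono_left (nhdsWithin_le_nhds (s := Set.Ioi (0:ℝ)))
    simpa using h
  have htDp : Tendsto (fun t => Dplus f t x) (𝓝[>] (0 : ℝ)) (𝓝 0) := by
    refine tendsto_of_tendsto_of_tendsto_of_le_of_le' tendsto_const_nhds hsq ?_ ?_
    · filter_upwards [self_mem_nhdsWithin] with t ht
      simp only [Set.mem_Ioi] at ht
      exact (Dminus_nonneg hC ht).trans (Dminus_le_Dplus hC ht)
    · filter_upwards [self_mem_nhdsWithin] with t ht
      simp only [Set.mem_Ioi] at ht
      exact Dplus_le_sqrt hC ht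
  have htDm : Tendsto (fun t => Dminus f t x) (𝓝[>] (0 : ℝ)) (𝓝 0) := by
    refine tendsto_of_tendsto_of_tendsto_of_le_of_le' tendsto_const_nhds hsq ?_ ?_
    · filter_upwards [self_mem_nhdsWithin] with t ht
      simp only [Set.mem_Ioi] at ht
      exact Dminus_nonneg hC ht
    · filter_upwards [self_mem_nhdsWithin] with t ht
      simp only [Set.mem_Ioi] at ht
      exact (Dminus_le_Dplus hC ht).trans (Dplus_le_sqrt hC ht)
  -- Monotonicity
  have hmono : ∀ t s : ℝ, 0 < t → t < s →
      Dminus f t x ≤ Dplus f t x ∧ Dplus f t x ≤ Dminus f s x :=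
    fun t s ht hts => ⟨Dminus_le_Dplus hC ht, Dplus_le_Dminus hC ht hts⟩
  -- Countability
  have hcount : Set.Countable { t : ℝ | 0 < t ∧ Dplus f t x ≠ Dminus f t x } := by
    set g : ℝ → ℝ := fun t => if t ≤ 0 then 0 else Dminus f t x with hg
    have hgmono : Monotone g := by
      intro a b hab
      by_cases ha : a ≤ 0
      · by_cases hb : b ≤ 0
        · simp [hg, ha, hb]
        · have hb' : 0 < b := lt_of_not_ge hb
          simp only [hg, if_pos ha, if_neg hb]
          exact Dminus_nonneg hC hb'
      · have ha' : 0 < a := lt_of_not_ge ha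
        have hb' : 0 < b := ha'.trans_le hab
        simp only [hg, if_neg ha, if_neg hb'.not_ge]
        rcases eq_or_lt_of_le hab with rfl | h
        · exact le_refl _
        · exact Dminus_mono hC ha' h
    refine (hgmono.countable_not_continuousAt).mono ?_
    rintro t ⟨ht, hne⟩
    simp only [Set.mem_setOf_eq]
    intro hc
    apply hne
    have h1 : Tendsto g (𝓝[>] t) (𝓝 (g t)) :=
      hc.tendsto.mono_left nhdsWithin_le_nhds
    have h2 : ∀ᶠ u in 𝓝[>] t, Dplus f t x ≤ g u := by
      filter_upwards [self_mem_nhdsWithin] with u hu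
      simp only [Set.mem_Ioi] at hu
      have hu0 : 0 < u := ht.trans hu
      simp only [hg, if_neg hu0.not_ge]
      exact Dplus_le_Dminus hC ht hu
    have h3 : Dplus f t x ≤ g t := ge_of_tendsto h1 h2
    have h4 : g t = Dminus f t x := by simp [hg, ht.not_ge]
    rw [h4] at h3
    exact le_antisymm h3 (Dminus_le_Dplus hC ht)
  exact ⟨husc, hlscD, htDp, htDm, hmono, hcount⟩
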